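/- arXiv:1205.5853 — 6 statements merged into one kernel-verified Lean document; each statement's English description precedes it below -/
import Mathlib

section
/- Let A be an n×n complex matrix and D = diag(a_{11},...,a_{nn}) the diagonal matrix of its diagonal entries. If AᵀDA = 0, then rank(A) ≤ (n + δ)/2, where δ is the number of indices i with a_{ii} = 0. -/
open Matrix Module Submodule

lemma sylvester_rank_ineq {m n o : Type*} [Fintype m] [Fintype n] [Fintype o]
    [DecidableEq n] (A : Matrix m n ℂ) (B : Matrix n o ℂ) :
    A.rank + B.rank ≤ (A * B).rank + Fintype.card n := by
  classical
  set g := A.mulVecLin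
  set f := B.mulVecLin
  have hAB : (A * B).rank = finrank ℂ (LinearMap.range f |>.map g) := by
    rw [Matrix.rank, mulVecLin_mul, LinearMap.range_comp]
  -- rank-nullity on g restricted to range f
  have h1 : finrank ℂ ((LinearMap.range f).map g)
      + finrank ℂ (LinearMap.ker (g.domRestrict (LinearMap.range f)))
      = finrank ℂ (LinearMap.range f) := by
    have := LinearMap.finrank_range_add_finrank_ker (g.domRestrict (LinearMap.range f))
    rwa [LinearMap.range_domRestrict] at this
  have h2 : finrank ℂ (LinearMap.ker (g.domRestrict (LinearMap.range f)))
      ≤ finrank ℂ (LinearMap.ker g) := by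
    have hmap : ((LinearMap.ker (g.domRestrict (LinearMap.range f))).map
        (LinearMap.range f).subtype) ≤ LinearMap.ker g := by
      rintro x ⟨y, hy, rfl⟩
      simpa [LinearMap.mem_ker] using hy
    calc finrank ℂ (LinearMap.ker (g.domRestrict (LinearMap.range f)))
        = finrank ℂ ((LinearMap.ker (g.domRestrict (LinearMap.range f))).map
            (LinearMap.range f).subtype) :=
          (Submodule.finrank_map_subtype_eq _ _).symm
      _ ≤ finrank ℂ (LinearMap.ker g) := Submodule.finrank_mono hmap
  have h3 : A.rank + finrank ℂ (LinearMap.ker g) = Fintype.card n := by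
    have := LinearMap.finrank_range_add_finrank_ker g
    rwa [Module.finrank_fintype_fun_eq_card] at this
  have hBr : B.rank = finrank ℂ (LinearMap.range f) := rfl
  omega
theorem stmt_2 (n : ℕ) (A : Matrix (Fin n) (Fin n) ℂ)
    (h : A.transpose * Matrix.diagonal (fun i => A i i) * A = 0) :
    2 * A.rank ≤ n + (Finset.univ.filter fun i => A i i = 0).card := by
  classical
  set D := Matrix.diagonal (fun i => A i i) with hD
  have h0 : Aᵀ * (D * A) = 0 := by rw [← Matrix.mul_assoc]; exact h
  have h1 : Aᵀ.rank + (D * A).rank ≤ Fintype.card (Fin n) :=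
    Matrix.rank_add_rank_le_card_of_mul_eq_zero h0
  have h2 : D.rank + A.rank ≤ (D * A).rank + Fintype.card (Fin n) :=
    sylvester_rank_ineq D A
  have h3 : Aᵀ.rank = A.rank := Matrix.rank_transpose A
  have h4 : D.rank = Fintype.card {i // A i i ≠ 0} := Matrix.rank_diagonal _
  have h5 : Fintype.card {i // A i i ≠ 0}
      + (Finset.univ.filter fun i => A i i = 0).card = n := by
    rw [Fintype.card_subtype]
    simp only [ne_eq]
    rw [add_comm, Finset.card_filter_add_card_filter_not, Finset.card_univ,
      Fintype.card_fin]
  simp only [Fintype.card_fin] at h1 h2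
  omega
end

section
/- Let F(X) = X + (AX)^{*3} be a Drużkowski mapping. If the trace of the Jacobian matrix of H(X) = (AX)^{*3} is identically zero as a polynomial in x_1,...,x_n, then rank(A) ≤ (n + δ)/2, where δ is the number of diagonal entries a_{ii} of A equal to zero. -/
open Matrix

lemma rank_add_le_aux {m : ℕ} (A B : Matrix (Fin m) (Fin m) ℂ) :
    (A + B).rank ≤ A.rank + B.rank := by
  rw [Matrix.rank, Matrix.rank, Matrix.rank, Matrix.mulVecLin_add]
  refine le_trans (Submodule.finrank_mono ?_) (Submodule.finrank_add_le_finrank_add_finrank _ _)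
  rintro y ⟨x, rfl⟩
  exact Submodule.add_mem_sup ⟨x, rfl⟩ ⟨x, rfl⟩

theorem stmt_4 (n : ℕ) (A : Matrix (Fin n) (Fin n) ℂ)
    (h : ∀ x : Fin n → ℂ, Matrix.trace (Matrix.of fun i j =>
        fderiv ℂ (fun y : Fin n → ℂ => (∑ k, A i k * y k) ^ 3) x (Pi.single j 1)) = 0) :
    2 * A.rank ≤ n + (Finset.univ.filter fun i => A i i = 0).card := by
  classical
  -- Step 1 : the trace hypothesis gives a vanishing quadratic form
  have hq : ∀ x : Fin n → ℂ, ∑ i, A i i * (∑ k, A i k * x k) ^ 2 = 0 := by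
    intro x
    have hfd : ∀ i j : Fin n,
        fderiv ℂ (fun y : Fin n → ℂ => (∑ k, A i k * y k) ^ 3) x (Pi.single j 1)
          = 3 * (∑ k, A i k * x k) ^ 2 * A i j := by
      intro i j
      set L : (Fin n → ℂ) →L[ℂ] ℂ :=
        ∑ k, A i k • ContinuousLinearMap.proj (R := ℂ) (φ := fun _ : Fin n => ℂ) k with hLdef
      have hLapp : ∀ y : Fin n → ℂ, L y = ∑ k, A i k * y k := by
        intro y
        simp [hLdef, ContinuousLinearMap.sum_apply]
      have hL : HasFDerivAt (fun y : Fin n → ℂ => ∑ k, A i k * y k) L x := by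
        have := L.hasFDerivAt (x := x)
        refine this.congr_of_eventuallyEq (Filter.Eventually.of_forall ?_)
        intro y; exact (hLapp y).symm
      have hcube' := hL.mul (hL.mul hL)
      have hcube : HasFDerivAt (fun y : Fin n → ℂ => (∑ k, A i k * y k) ^ 3)
          ((∑ k, A i k * x k) • ((∑ k, A i k * x k) • L + (∑ k, A i k * x k) • L)
            + ((∑ k, A i k * x k) * (∑ k, A i k * x k)) • L) x := by
        refine hcube'.congr_of_eventuallyEq (Filter.Eventually.of_forall ?_)
        intro y; simp only [Pi.mul_apply]; ring
      rw [hcube.fderiv]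
      have hLs : L (Pi.single j 1) = A i j := by
        rw [hLapp]
        simp [Pi.single_apply, mul_ite, Finset.sum_ite_eq']
      simp [hLs]
      ring
    have htr := h x
    have : ∑ i : Fin n, 3 * (∑ k, A i k * x k) ^ 2 * A i i = 0 := by
      rw [Matrix.trace] at htr
      simpa [Matrix.diag, hfd] using htr
    have h3 : (3 : ℂ) * ∑ i, A i i * (∑ k, A i k * x k) ^ 2 = 0 := by
      rw [Finset.mul_sum]
      rw [← this]
      exact Finset.sum_congr rfl fun i _ => by ring
    have := mul_eq_zero.mp h3
    rcases this with h' | h'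
    · norm_num at h'
    · exact h'
  -- Step 2 : polarization gives Aᵀ * (D * A) = 0
  set D : Matrix (Fin n) (Fin n) ℂ := Matrix.diagonal (fun i => A i i) with hD
  have hB : Aᵀ * (D * A) = 0 := by
    ext p r
    have hsingle : ∀ q : Fin n, ∀ i : Fin n,
        ∑ k, A i k * (Pi.single q 1 : Fin n → ℂ) k = A i q := by
      intro q i
      simp [Pi.single_apply, mul_ite, Finset.sum_ite_eq']
    have hsum : ∀ i : Fin n,
        ∑ k, A i k * ((Pi.single p 1 : Fin n → ℂ) k + (Pi.single r 1 : Fin n → ℂ) k)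
          = A i p + A i r := by
      intro i
      have : ∀ k, A i k * ((Pi.single p 1 : Fin n → ℂ) k + (Pi.single r 1 : Fin n → ℂ) k)
          = A i k * (Pi.single p 1 : Fin n → ℂ) k + A i k * (Pi.single r 1 : Fin n → ℂ) k := by
        intro k; simp [mul_add]
      rw [Finset.sum_congr rfl fun k _ => this k, Finset.sum_add_distrib,
        hsingle p, hsingle r]
    have e1 : ∑ i, A i i * (A i p) ^ 2 = 0 := by
      have := hq (Pi.single p 1)
      simpa [hsingle p] using this
    have e2 : ∑ i, A i i * (A i r) ^ 2 = 0 := by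
      have := hq (Pi.single r 1)
      simpa [hsingle r] using this
    have e3 : ∑ i, A i i * (A i p + A i r) ^ 2 = 0 := by
      have := hq (Pi.single p 1 + Pi.single r 1)
      simp only [Pi.add_apply] at this
      simpa [hsum] using this
    have key : (2 : ℂ) * ∑ i, A i p * (A i i * A i r) = 0 := by
      rw [Finset.mul_sum]
      calc ∑ i, 2 * (A i p * (A i i * A i r))
          = ∑ i, (A i i * (A i p + A i r) ^ 2 - A i i * (A i p) ^ 2 - A i i * (A i r) ^ 2) :=
            Finset.sum_congr rfl fun i _ => by ring
        _ = 0 := by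
            rw [Finset.sum_sub_distrib, Finset.sum_sub_distrib, e1, e2, e3]; ring
    have key2 : ∑ i, A i p * (A i i * A i r) = 0 := by
      rcases mul_eq_zero.mp key with h' | h'
      · norm_num at h'
      · exact h'
    simp only [hD, Matrix.mul_apply, Matrix.transpose_apply, Matrix.diagonal_apply,
      Matrix.zero_apply, ite_mul, zero_mul, Finset.sum_ite_eq, Finset.mem_univ, if_true]
    simpa using key2
  -- Step 3 : rank inequalities
  set P : Matrix (Fin n) (Fin n) ℂ :=
    Matrix.diagonal (fun i => if A i i = 0 then (1 : ℂ) else 0) with hP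
  set E : Matrix (Fin n) (Fin n) ℂ := Matrix.diagonal (fun i => (A i i)⁻¹) with hE
  have hdecomp : A = E * (D * A) + P * A := by
    ext i j
    simp only [Matrix.add_apply, hE, hP, hD, Matrix.diagonal_mul]
    by_cases hii : A i i = 0
    · simp [hii]
    · field_simp [hii]
      simp [hii]
  have h1 : Aᵀ.rank + (D * A).rank ≤ n := by
    have := Matrix.rank_add_rank_le_card_of_mul_eq_zero hB
    simpa using this
  have h2 : A.rank ≤ (D * A).rank + P.rank := by
    calc A.rank = (E * (D * A) + P * A).rank := by rw [← hdecomp]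
      _ ≤ (E * (D * A)).rank + (P * A).rank := rank_add_le_aux _ _
      _ ≤ (D * A).rank + P.rank :=
          add_le_add (Matrix.rank_mul_le_right _ _) (Matrix.rank_mul_le_left _ _)
  have h3 : P.rank = (Finset.univ.filter fun i => A i i = 0).card := by
    rw [hP, Matrix.rank_diagonal, Fintype.card_subtype]
    congr 1
    ext i
    simp [ite_eq_right_iff]
  have h4 : Aᵀ.rank = A.rank := Matrix.rank_transpose A
  omega
end

section
/- Let F(X) = X + (AX)^{*3} be a Drużkowski mapping with det JF = 1 identically. If all diagonal entries of A are nonzero (Π_i a_{ii} ≠ 0), then rank(A) ≤ n/2. -/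
open Matrix Polynomial

lemma fderiv_entry {n : ℕ} (A : Matrix (Fin n) (Fin n) ℂ) (x : Fin n → ℂ) (i j : Fin n) :
    fderiv ℂ (fun y : Fin n → ℂ => y i + (∑ k, A i k * y k) ^ 3) x (Pi.single j 1)
      = (if i = j then (1:ℂ) else 0) + 3 * (∑ k, A i k * x k) ^ 2 * A i j := by
  set L2 : (Fin n → ℂ) →L[ℂ] ℂ :=
    ∑ k, A i k • (ContinuousLinearMap.proj k : (Fin n → ℂ) →L[ℂ] ℂ) with hL2
  have h2 : HasFDerivAt (fun y : Fin n → ℂ => ∑ k, A i k * y k) L2 x := by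
    apply HasFDerivAt.fun_sum
    intro k _
    simpa using ((hasFDerivAt_apply k x)).const_mul (A i k)
  set g : (Fin n → ℂ) → ℂ := fun y => ∑ k, A i k * y k with hg
  have h3 : HasFDerivAt (fun y : Fin n → ℂ => g y ^ 3)
      ((g x * g x) • L2 + g x • (g x • L2 + g x • L2)) x := by
    have := (h2.fun_mul h2).fun_mul h2
    rw [show (fun y : Fin n → ℂ => g y ^ 3) = fun y => g y * g y * g y from funext fun y => by ring]
    exact this
  have h1 : HasFDerivAt (fun y : Fin n → ℂ => y i)
      (ContinuousLinearMap.proj i : (Fin n → ℂ) →L[ℂ] ℂ) x := hasFDerivAt_apply i x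
  have h := (h1.fun_add h3).fderiv
  rw [h]
  have hL2app : L2 (Pi.single j 1) = A i j := by
    simp only [hL2, ContinuousLinearMap.coe_sum', Finset.sum_apply,
      ContinuousLinearMap.smul_apply, ContinuousLinearMap.proj_apply, Pi.single_apply,
      smul_eq_mul, mul_ite, mul_one, mul_zero]
    rw [Finset.sum_ite_eq' Finset.univ j (fun k => A i k)]
    simp
  simp only [ContinuousLinearMap.add_apply, ContinuousLinearMap.smul_apply,
    ContinuousLinearMap.proj_apply, Pi.single_apply, smul_eq_mul, hL2app]
  simp only [hg]
  ring

theorem stmt_5 (n : ℕ) (A : Matrix (Fin n) (Fin n) ℂ)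
    (hdet : ∀ x : Fin n → ℂ, Matrix.det (Matrix.of fun i j =>
        fderiv ℂ (fun y : Fin n → ℂ => y i + (∑ k, A i k * y k) ^ 3) x (Pi.single j 1)) = 1)
    (hdiag : ∀ i, A i i ≠ 0) :
    2 * A.rank ≤ n := by
  classical
  set B : (Fin n → ℂ) → Matrix (Fin n) (Fin n) ℂ :=
    fun x => Matrix.of fun i j => 3 * (∑ k, A i k * x k) ^ 2 * A i j with hB
  have hdet' : ∀ x : Fin n → ℂ, (1 + B x).det = 1 := by
    intro x
    have := hdet x
    rw [show (Matrix.of fun i j =>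
        fderiv ℂ (fun y : Fin n → ℂ => y i + (∑ k, A i k * y k) ^ 3) x (Pi.single j 1))
        = 1 + B x from ?_] at this
    · exact this
    · ext i j
      simp [fderiv_entry, Matrix.one_apply, hB]
  have hscale : ∀ (c : ℂ) (x : Fin n → ℂ), B (c • x) = c ^ 2 • B x := by
    intro c x
    ext i j
    simp only [hB, Matrix.of_apply, Matrix.smul_apply, smul_eq_mul, Pi.smul_apply]
    rw [show (∑ k, A i k * (c * x k)) = c * ∑ k, A i k * x k by
      rw [Finset.mul_sum]; congr 1; ext k; ring]
    ring
  have hdet2 : ∀ (c : ℂ) (x : Fin n → ℂ), (1 + c • B x).det = 1 := by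
    intro c x
    obtain ⟨t, ht⟩ := Complex.isAlgClosed.exists_pow_nat_eq c (n := 2) (by norm_num)
    rw [← ht, ← hscale t x]
    exact hdet' _
  have htr : ∀ x : Fin n → ℂ, (B x).trace = 0 := by
    intro x
    have hpoly : (1 + (X : ℂ[X]) • (B x).map C).det =
        (1 : ℂ[X]) + (B x).trace • X + ((1 + (X : ℂ[X]) • (B x).map C).det).divX.divX * X ^ 2 :=
      Matrix.det_one_add_X_smul (B x)
    have heq : (1 + (X : ℂ[X]) • (B x).map C).det = C 1 := by
      apply Polynomial.funext
      intro c
      have hmap : (1 + (X : ℂ[X]) • (B x).map C).map (Polynomial.evalRingHom c)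
          = 1 + c • B x := by
        ext i j
        rw [Matrix.map_apply, Matrix.add_apply, Matrix.add_apply, Matrix.smul_apply,
          Matrix.smul_apply, Matrix.map_apply, Matrix.one_apply, Matrix.one_apply,
          smul_eq_mul, smul_eq_mul, map_add]
        by_cases h : i = j <;>
          simp only [Polynomial.coe_evalRingHom, h, if_true, if_false, Polynomial.eval_one,
            Polynomial.eval_zero, Polynomial.eval_mul, Polynomial.eval_X, Polynomial.eval_C]
      calc Polynomial.eval c (1 + (X : ℂ[X]) • (B x).map C).det
          = (Polynomial.evalRingHom c) (1 + (X : ℂ[X]) • (B x).map C).det := rfl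
        _ = ((1 + (X : ℂ[X]) • (B x).map C).map (Polynomial.evalRingHom c)).det :=
            RingHom.map_det _ _
        _ = 1 := by rw [hmap, hdet2]
        _ = Polynomial.eval c (C 1) := by simp
    have := congrArg (fun p => Polynomial.coeff p 1) heq
    rw [hpoly] at this
    simpa [Polynomial.coeff_one, Polynomial.smul_eq_C_mul, Polynomial.coeff_C_mul,
      Polynomial.coeff_X_one, pow_two, ← mul_assoc, Polynomial.coeff_mul_X,
      Polynomial.coeff_C] using this
  have hQ : ∀ x : Fin n → ℂ, ∑ i, A i i * (∑ k, A i k * x k) ^ 2 = 0 := by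
    intro x
    have h0 := htr x
    rw [Matrix.trace] at h0
    simp only [hB, Matrix.diag_apply, Matrix.of_apply] at h0
    have h3 : (3:ℂ) * ∑ i, A i i * (∑ k, A i k * x k) ^ 2 = 0 := by
      rw [Finset.mul_sum, ← h0]; congr 1; ext i; ring
    exact (mul_eq_zero.mp h3).resolve_left (by norm_num)
  set D : Matrix (Fin n) (Fin n) ℂ := Matrix.diagonal (fun i => A i i) with hD
  have hS : Aᵀ * (D * A) = 0 := by
    ext j l
    have hsingle : ∀ (i j : Fin n), (∑ k, A i k * (Pi.single j 1 : Fin n → ℂ) k) = A i j := by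
      intro i j
      simp [Pi.single_apply, mul_ite, Finset.sum_ite_eq]
    have h1 := hQ (Pi.single j 1)
    have h2 := hQ (Pi.single l 1)
    have h12 := hQ (Pi.single j 1 + Pi.single l 1)
    simp only [hsingle] at h1 h2
    simp only [Pi.add_apply, mul_add, Finset.sum_add_distrib, hsingle] at h12
    have h12' : ∑ i, A i i * (A i j + A i l) ^ 2 = 0 := h12
    have key : ∑ i, A i i * (2 * (A i j * A i l)) = 0 := by
      have hexp : ∑ i, A i i * (A i j + A i l) ^ 2
          = (∑ i, A i i * (A i j)^2) + (∑ i, A i i * (A i l)^2)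
            + ∑ i, A i i * (2 * (A i j * A i l)) := by
        rw [← Finset.sum_add_distrib, ← Finset.sum_add_distrib]
        congr 1; ext i; ring
      rw [h12', h1, h2] at hexp
      simpa using hexp.symm
    have key2 : ∑ i, A i j * (A i i * A i l) = 0 := by
      have h2' : (2:ℂ) * ∑ i, A i j * (A i i * A i l) = 0 := by
        rw [Finset.mul_sum, ← key]; congr 1; ext i; ring
      exact (mul_eq_zero.mp h2').resolve_left two_ne_zero
    simp only [Matrix.mul_apply, Matrix.transpose_apply, Matrix.zero_apply, hD,
      Matrix.diagonal_apply, ite_mul, zero_mul, Finset.sum_ite_eq, Finset.mem_univ, if_true]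
    exact key2
  have hrank : Aᵀ.rank + (D * A).rank ≤ Fintype.card (Fin n) :=
    Matrix.rank_add_rank_le_card_of_mul_eq_zero hS
  rw [Matrix.rank_transpose] at hrank
  rw [Matrix.rank_mul_eq_right_of_isUnit_det D A ?_] at hrank
  · simpa [two_mul] using hrank
  · rw [hD, Matrix.det_diagonal]
    exact IsUnit.mk0 _ (Finset.prod_ne_zero_iff.mpr fun i _ => hdiag i)
end

section
/- Let F: ℂ^4 → ℂ^4 be given by F_1 = x_1 + (x_1 + i x_2 + x_3 + x_4)^3, F_2 = x_2 + i(x_1 + i x_2 + x_3 + x_4)^3, F_3 = x_3 - (x_1 + i x_2 - x_3 + x_4)^3, F_4 = x_4 - (x_1 + i x_2 - x_3 + x_4)^3. Then the determinant of the Jacobian matrix of F is identically 1. -/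
open Complex

noncomputable def pr (k : Fin 4) : (Fin 4 → ℂ) →L[ℂ] ℂ := ContinuousLinearMap.proj k

set_option maxHeartbeats 1000000 in
open Complex in
theorem stmt_8
    (F : (Fin 4 → ℂ) → Fin 4 → ℂ)
    (hF : ∀ x, F x = ![x 0 + (x 0 + I * x 1 + x 2 + x 3) ^ 3,
                      x 1 + I * (x 0 + I * x 1 + x 2 + x 3) ^ 3,
                      x 2 - (x 0 + I * x 1 - x 2 + x 3) ^ 3,
                      x 3 - (x 0 + I * x 1 - x 2 + x 3) ^ 3]) :
    ∀ x : Fin 4 → ℂ, Matrix.det (Matrix.of fun i j =>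
        fderiv ℂ (fun y => F y i) x (Pi.single j 1)) = 1 := by
  intro x
  have hproj : ∀ k : Fin 4, HasFDerivAt (fun y : Fin 4 → ℂ => y k) (pr k) x :=
    fun k => by
      exact (ContinuousLinearMap.proj (R := ℂ) (φ := fun _ : Fin 4 => ℂ) k).hasFDerivAt (x := x)
  set u : ℂ := x 0 + I * x 1 + x 2 + x 3 with hu'
  set v : ℂ := x 0 + I * x 1 - x 2 + x 3 with hv'
  set L1 : (Fin 4 → ℂ) →L[ℂ] ℂ := pr 0 + I • pr 1 + pr 2 + pr 3 with hL1
  set L2 : (Fin 4 → ℂ) →L[ℂ] ℂ := pr 0 + I • pr 1 - pr 2 + pr 3 with hL2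
  have hu : HasFDerivAt (fun y : Fin 4 → ℂ => y 0 + I * y 1 + y 2 + y 3) L1 x :=
    (((hproj 0).add ((hproj 1).const_mul I)).add (hproj 2)).add (hproj 3)
  have hv : HasFDerivAt (fun y : Fin 4 → ℂ => y 0 + I * y 1 - y 2 + y 3) L2 x :=
    (((hproj 0).add ((hproj 1).const_mul I)).sub (hproj 2)).add (hproj 3)
  set a : ℂ := 3 * u ^ 2 with ha
  set b : ℂ := 3 * v ^ 2 with hb
  have hu3 : HasFDerivAt (fun y : Fin 4 → ℂ => (y 0 + I * y 1 + y 2 + y 3) ^ 3) (a • L1) x := by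
    have := (hasDerivAt_pow 3 u).comp_hasFDerivAt x hu
    simpa [Function.comp_def, ha] using this
  have hv3 : HasFDerivAt (fun y : Fin 4 → ℂ => (y 0 + I * y 1 - y 2 + y 3) ^ 3) (b • L2) x := by
    have := (hasDerivAt_pow 3 v).comp_hasFDerivAt x hv
    simpa [Function.comp_def, hb] using this
  have e0 : (fun y => F y 0) = fun y : Fin 4 → ℂ => y 0 + (y 0 + I * y 1 + y 2 + y 3) ^ 3 := by
    funext y; rw [hF]; rfl
  have e1 : (fun y => F y 1) = fun y : Fin 4 → ℂ => y 1 + I * (y 0 + I * y 1 + y 2 + y 3) ^ 3 := by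
    funext y; rw [hF]; rfl
  have e2 : (fun y => F y 2) = fun y : Fin 4 → ℂ => y 2 - (y 0 + I * y 1 - y 2 + y 3) ^ 3 := by
    funext y; rw [hF]; rfl
  have e3 : (fun y => F y 3) = fun y : Fin 4 → ℂ => y 3 - (y 0 + I * y 1 - y 2 + y 3) ^ 3 := by
    funext y; rw [hF]; rfl
  have hD0 : fderiv ℂ (fun y => F y 0) x = pr 0 + a • L1 := by
    rw [e0]; exact ((hproj 0).add hu3).fderiv
  have hD1 : fderiv ℂ (fun y => F y 1) x = pr 1 + I • (a • L1) := by
    rw [e1]; exact ((hproj 1).add (hu3.const_mul I)).fderiv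
  have hD2 : fderiv ℂ (fun y => F y 2) x = pr 2 - b • L2 := by
    rw [e2]; exact ((hproj 2).sub hv3).fderiv
  have hD3 : fderiv ℂ (fun y => F y 3) x = pr 3 - b • L2 := by
    rw [e3]; exact ((hproj 3).sub hv3).fderiv
  clear_value a b
  clear ha hb hu3 hv3 hu hv e0 e1 e2 e3 hu' hv'
  have key : ∀ j : Fin 4, (L1 (Pi.single j 1) = ![1, I, 1, 1] j) ∧
      (L2 (Pi.single j 1) = ![1, I, -1, 1] j) := by
    intro j
    fin_cases j <;>
      constructor <;>
      · simp (config := { decide := true }) [hL1, hL2, pr, ContinuousLinearMap.add_apply,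
          ContinuousLinearMap.sub_apply, ContinuousLinearMap.smul_apply,
          ContinuousLinearMap.proj_apply, Pi.single_apply, smul_eq_mul]
  have h00 : fderiv ℂ (fun y => F y 0) x (Pi.single (0 : Fin 4) 1) = 1 + a := by
    rw [hD0]
    simp [ContinuousLinearMap.add_apply, ContinuousLinearMap.sub_apply,
      ContinuousLinearMap.smul_apply, smul_eq_mul, (key 0).1, (key 0).2, pr, Pi.single_apply]
    try ring
  have h01 : fderiv ℂ (fun y => F y 0) x (Pi.single (1 : Fin 4) 1) = a * I := by
    rw [hD0]
    simp [ContinuousLinearMap.add_apply, ContinuousLinearMap.sub_apply,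
      ContinuousLinearMap.smul_apply, smul_eq_mul, (key 1).1, (key 1).2, pr, Pi.single_apply]
    try ring
  have h02 : fderiv ℂ (fun y => F y 0) x (Pi.single (2 : Fin 4) 1) = a := by
    rw [hD0]
    simp [ContinuousLinearMap.add_apply, ContinuousLinearMap.sub_apply,
      ContinuousLinearMap.smul_apply, smul_eq_mul, (key 2).1, (key 2).2, pr, Pi.single_apply]
    try ring
  have h03 : fderiv ℂ (fun y => F y 0) x (Pi.single (3 : Fin 4) 1) = a := by
    rw [hD0]
    simp [ContinuousLinearMap.add_apply, ContinuousLinearMap.sub_apply,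
      ContinuousLinearMap.smul_apply, smul_eq_mul, (key 3).1, (key 3).2, pr, Pi.single_apply]
    try ring
  have h10 : fderiv ℂ (fun y => F y 1) x (Pi.single (0 : Fin 4) 1) = a * I := by
    rw [hD1]
    simp [ContinuousLinearMap.add_apply, ContinuousLinearMap.sub_apply,
      ContinuousLinearMap.smul_apply, smul_eq_mul, (key 0).1, (key 0).2, pr, Pi.single_apply]
    try ring
  have h11 : fderiv ℂ (fun y => F y 1) x (Pi.single (1 : Fin 4) 1) = 1 + I * (a * I) := by
    rw [hD1]
    simp [ContinuousLinearMap.add_apply, ContinuousLinearMap.sub_apply,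
      ContinuousLinearMap.smul_apply, smul_eq_mul, (key 1).1, (key 1).2, pr, Pi.single_apply]
    try ring
  have h12 : fderiv ℂ (fun y => F y 1) x (Pi.single (2 : Fin 4) 1) = a * I := by
    rw [hD1]
    simp [ContinuousLinearMap.add_apply, ContinuousLinearMap.sub_apply,
      ContinuousLinearMap.smul_apply, smul_eq_mul, (key 2).1, (key 2).2, pr, Pi.single_apply]
    try ring
  have h13 : fderiv ℂ (fun y => F y 1) x (Pi.single (3 : Fin 4) 1) = a * I := by
    rw [hD1]
    simp [ContinuousLinearMap.add_apply, ContinuousLinearMap.sub_apply,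
      ContinuousLinearMap.smul_apply, smul_eq_mul, (key 3).1, (key 3).2, pr, Pi.single_apply]
    try ring
  have h20 : fderiv ℂ (fun y => F y 2) x (Pi.single (0 : Fin 4) 1) = -b := by
    rw [hD2]
    simp [ContinuousLinearMap.add_apply, ContinuousLinearMap.sub_apply,
      ContinuousLinearMap.smul_apply, smul_eq_mul, (key 0).1, (key 0).2, pr, Pi.single_apply]
    try ring
  have h21 : fderiv ℂ (fun y => F y 2) x (Pi.single (1 : Fin 4) 1) = -(b * I) := by
    rw [hD2]
    simp [ContinuousLinearMap.add_apply, ContinuousLinearMap.sub_apply,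
      ContinuousLinearMap.smul_apply, smul_eq_mul, (key 1).1, (key 1).2, pr, Pi.single_apply]
    try ring
  have h22 : fderiv ℂ (fun y => F y 2) x (Pi.single (2 : Fin 4) 1) = 1 + b := by
    rw [hD2]
    simp [ContinuousLinearMap.add_apply, ContinuousLinearMap.sub_apply,
      ContinuousLinearMap.smul_apply, smul_eq_mul, (key 2).1, (key 2).2, pr, Pi.single_apply]
    try ring
  have h23 : fderiv ℂ (fun y => F y 2) x (Pi.single (3 : Fin 4) 1) = -b := by
    rw [hD2]
    simp [ContinuousLinearMap.add_apply, ContinuousLinearMap.sub_apply,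
      ContinuousLinearMap.smul_apply, smul_eq_mul, (key 3).1, (key 3).2, pr, Pi.single_apply]
    try ring
  have h30 : fderiv ℂ (fun y => F y 3) x (Pi.single (0 : Fin 4) 1) = -b := by
    rw [hD3]
    simp [ContinuousLinearMap.add_apply, ContinuousLinearMap.sub_apply,
      ContinuousLinearMap.smul_apply, smul_eq_mul, (key 0).1, (key 0).2, pr, Pi.single_apply]
    try ring
  have h31 : fderiv ℂ (fun y => F y 3) x (Pi.single (1 : Fin 4) 1) = -(b * I) := by
    rw [hD3]
    simp [ContinuousLinearMap.add_apply, ContinuousLinearMap.sub_apply,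
      ContinuousLinearMap.smul_apply, smul_eq_mul, (key 1).1, (key 1).2, pr, Pi.single_apply]
    try ring
  have h32 : fderiv ℂ (fun y => F y 3) x (Pi.single (2 : Fin 4) 1) = b := by
    rw [hD3]
    simp [ContinuousLinearMap.add_apply, ContinuousLinearMap.sub_apply,
      ContinuousLinearMap.smul_apply, smul_eq_mul, (key 2).1, (key 2).2, pr, Pi.single_apply]
    try ring
  have h33 : fderiv ℂ (fun y => F y 3) x (Pi.single (3 : Fin 4) 1) = 1 - b := by
    rw [hD3]
    simp [ContinuousLinearMap.add_apply, ContinuousLinearMap.sub_apply,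
      ContinuousLinearMap.smul_apply, smul_eq_mul, (key 3).1, (key 3).2, pr, Pi.single_apply]
    try ring
  have hM : Matrix.of (fun i j => fderiv ℂ (fun y => F y i) x (Pi.single j 1)) =
      !![1 + a, a * I, a, a;
         a * I, 1 + I * (a * I), a * I, a * I;
         -b, -(b * I), 1 + b, -b;
         -b, -(b * I), b, 1 - b] := by
    funext i j
    fin_cases i <;> fin_cases j <;>
      first
      | exact h00
      | exact h01
      | exact h02
      | exact h03
      | exact h10
      | exact h11
      | exact h12
      | exact h13
      | exact h20
      | exact h21
      | exact h22
      | exact h23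
      | exact h30
      | exact h31
      | exact h32
      | exact h33
  have f1 : (Fin.succ 2 : Fin 4) = 3 := rfl
  have f2 : Fin.succAbove (1 : Fin 4) (2 : Fin 3) = 3 := rfl
  have f3 : Fin.succAbove (2 : Fin 4) (2 : Fin 3) = 3 := rfl
  have f4 : (Fin.castSucc 2 : Fin 4) = 2 := rfl
  have f5 : Fin.succAbove (3 : Fin 4) (2 : Fin 3) = 2 := rfl
  rw [hM]
  simp [Matrix.det_succ_row_zero, Fin.sum_univ_succ, f1, f2, f3, f4, f5]
  ring_nf
  simp only [Complex.I_sq]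
  ring
end

section
/- Let F: ℂ^4 → ℂ^4 be given by F_1 = x_1 + (x_1 + i x_2 + x_3 + x_4)^3, F_2 = x_2 + i(x_1 + i x_2 + x_3 + x_4)^3, F_3 = x_3 - (x_1 + i x_2 - x_3 + x_4)^3, F_4 = x_4 - (x_1 + i x_2 - x_3 + x_4)^3. Then F is a bijection of ℂ^4. -/
open Complex

noncomputable def uu9 (x : Fin 4 → ℂ) : ℂ := x 0 + I * x 1 + x 2 + x 3
noncomputable def vv9 (x : Fin 4 → ℂ) : ℂ := x 0 + I * x 1 - x 2 + x 3
noncomputable def Gm9 (y : Fin 4 → ℂ) : Fin 4 → ℂ :=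
  ![y 0 - (uu9 y + 2 * (vv9 y) ^ 3) ^ 3,
    y 1 - I * (uu9 y + 2 * (vv9 y) ^ 3) ^ 3,
    y 2 + (vv9 y) ^ 3,
    y 3 + (vv9 y) ^ 3]

open Complex in
theorem stmt_9
    (F : (Fin 4 → ℂ) → Fin 4 → ℂ)
    (hF : ∀ x, F x = ![x 0 + (x 0 + I * x 1 + x 2 + x 3) ^ 3,
                      x 1 + I * (x 0 + I * x 1 + x 2 + x 3) ^ 3,
                      x 2 - (x 0 + I * x 1 - x 2 + x 3) ^ 3,
                      x 3 - (x 0 + I * x 1 - x 2 + x 3) ^ 3]) :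
    Function.Bijective F := by
  have hF0 : ∀ x, F x 0 = x 0 + (x 0 + I * x 1 + x 2 + x 3) ^ 3 := fun x => by rw [hF]; rfl
  have hF1 : ∀ x, F x 1 = x 1 + I * (x 0 + I * x 1 + x 2 + x 3) ^ 3 := fun x => by rw [hF]; rfl
  have hF2 : ∀ x, F x 2 = x 2 - (x 0 + I * x 1 - x 2 + x 3) ^ 3 := fun x => by rw [hF]; rfl
  have hF3 : ∀ x, F x 3 = x 3 - (x 0 + I * x 1 - x 2 + x 3) ^ 3 := fun x => by rw [hF]; rfl
  have hG0 : ∀ y, Gm9 y 0 = y 0 - (uu9 y + 2 * (vv9 y) ^ 3) ^ 3 := fun y => rfl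
  have hG1 : ∀ y, Gm9 y 1 = y 1 - I * (uu9 y + 2 * (vv9 y) ^ 3) ^ 3 := fun y => rfl
  have hG2 : ∀ y, Gm9 y 2 = y 2 + (vv9 y) ^ 3 := fun y => rfl
  have hG3 : ∀ y, Gm9 y 3 = y 3 + (vv9 y) ^ 3 := fun y => rfl
  have hud : ∀ x, uu9 x = x 0 + I * x 1 + x 2 + x 3 := fun x => rfl
  have hvd : ∀ x, vv9 x = x 0 + I * x 1 - x 2 + x 3 := fun x => rfl
  have hv : ∀ x, vv9 (F x) = vv9 x := by
    intro x
    rw [hvd (F x), hF0, hF1, hF2, hF3]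
    linear_combination (x 0 + I * x 1 + x 2 + x 3) ^ 3 * Complex.I_sq - hvd x
  have hu : ∀ x, uu9 (F x) = uu9 x - 2 * (vv9 x) ^ 3 := by
    intro x
    rw [hud (F x), hF0, hF1, hF2, hF3]
    linear_combination (x 0 + I * x 1 + x 2 + x 3) ^ 3 * Complex.I_sq - hud x
      + 2 * ((vv9 x) ^ 2 + vv9 x * (x 0 + I * x 1 - x 2 + x 3)
        + (x 0 + I * x 1 - x 2 + x 3) ^ 2) * hvd x
  have hvG : ∀ y, vv9 (Gm9 y) = vv9 y := by
    intro y
    rw [hvd (Gm9 y), hG0, hG1, hG2, hG3]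
    linear_combination (-(uu9 y + 2 * (vv9 y) ^ 3) ^ 3) * Complex.I_sq - hvd y
  have huG : ∀ y, uu9 (Gm9 y) = uu9 y + 2 * (vv9 y) ^ 3 := by
    intro y
    rw [hud (Gm9 y), hG0, hG1, hG2, hG3]
    linear_combination (-(uu9 y + 2 * (vv9 y) ^ 3) ^ 3) * Complex.I_sq - hud y
  refine Function.bijective_iff_has_inverse.mpr ⟨Gm9, ?_, ?_⟩
  · intro x
    have key : uu9 (F x) + 2 * (vv9 (F x)) ^ 3 = uu9 x := by
      rw [hu, hv]; ring
    funext i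
    fin_cases i
    · show Gm9 (F x) 0 = x 0
      rw [hG0, key, hF0, hud]; ring
    · show Gm9 (F x) 1 = x 1
      rw [hG1, key, hF1, hud]; ring
    · show Gm9 (F x) 2 = x 2
      rw [hG2, hv, hF2, hvd]; ring
    · show Gm9 (F x) 3 = x 3
      rw [hG3, hv, hF3, hvd]; ring
  · intro y
    funext i
    fin_cases i
    · show F (Gm9 y) 0 = y 0
      rw [hF0, ← hud (Gm9 y), huG, hG0]; ring
    · show F (Gm9 y) 1 = y 1
      rw [hF1, ← hud (Gm9 y), huG, hG1]; ring
    · show F (Gm9 y) 2 = y 2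
      rw [hF2, ← hvd (Gm9 y), hvG, hG2]; ring
    · show F (Gm9 y) 3 = y 3
      rw [hF3, ← hvd (Gm9 y), hvG, hG3]; ring
end

section
/- Let A and H be n×n matrices over a field with H of rank n - δ. Suppose E_r H E_r = 0 where E_r is the diagonal matrix with the first r diagonal entries equal to 1 and the rest 0 (i.e., the upper-left r×r block of H is zero). Then r ≤ n + δ - r, i.e., r ≤ (n + δ)/2. -/
open Matrix

lemma matrix_rank_add_le {F : Type*} [Field F] {n : ℕ}
    (A B : Matrix (Fin n) (Fin n) F) : (A + B).rank ≤ A.rank + B.rank := by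
  unfold Matrix.rank
  rw [Matrix.mulVecLin_add]
  calc Module.finrank F ↥(LinearMap.range (A.mulVecLin + B.mulVecLin))
      ≤ Module.finrank F ↥(LinearMap.range A.mulVecLin ⊔ LinearMap.range B.mulVecLin) := by
        apply Submodule.finrank_mono
        rintro x ⟨v, rfl⟩
        exact Submodule.add_mem_sup ⟨v, rfl⟩ ⟨v, rfl⟩
    _ ≤ _ := Submodule.finrank_add_le_finrank_add_finrank _ _

theorem stmt_11 (F : Type*) [Field F] (n r δ : ℕ) (H : Matrix (Fin n) (Fin n) F)
    (hrank : H.rank = n - δ) (hδ : δ ≤ n)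
    (hzero : Matrix.diagonal (fun i : Fin n => if (i : ℕ) < r then (1 : F) else 0) * H *
      Matrix.diagonal (fun i : Fin n => if (i : ℕ) < r then (1 : F) else 0) = 0)
    (hr : r ≤ n) :
    r ≤ n + δ - r := by
  classical
  set w : Fin n → F := fun i => if (i : ℕ) < r then (1 : F) else 0 with hw
  set E : Matrix (Fin n) (Fin n) F := Matrix.diagonal w with hE
  have hcompl : (1 - E).rank = n - r := by
    have h1E : (1 : Matrix (Fin n) (Fin n) F) - E =
        Matrix.diagonal (fun i : Fin n => if (i : ℕ) < r then (0 : F) else 1) := by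
      ext i j
      by_cases h : i = j <;>
        simp [hE, hw, Matrix.sub_apply, Matrix.one_apply, Matrix.diagonal_apply, h] <;>
        split <;> simp
    rw [h1E, Matrix.rank_diagonal]
    have he : {i : Fin n // (if (i : ℕ) < r then (0:F) else 1) ≠ 0} ≃
        {i : Fin n // ¬ ((i:ℕ) < r)} := by
      apply Equiv.subtypeEquivRight; intro i; split <;> simp_all
    rw [Fintype.card_congr he, Fintype.card_subtype_compl]
    have he2 : {i : Fin n // (i : ℕ) < r} ≃ Fin r :=
      { toFun := fun i => ⟨i, i.2⟩
        invFun := fun j => ⟨⟨j, lt_of_lt_of_le j.2 hr⟩, j.2⟩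
        left_inv := fun i => rfl
        right_inv := fun j => rfl }
    rw [Fintype.card_congr he2, Fintype.card_fin, Fintype.card_fin]
  have hsplit : H = E * H + (1 - E) * H := by
    rw [sub_mul, one_mul]; abel
  have h1 : (E * H).rank ≤ n - r := by
    have heq : E * H = (E * H) * (1 - E) := by
      have h0 : E * H * E = 0 := hzero
      rw [mul_sub, mul_one, h0, sub_zero]
    rw [heq]
    calc ((E * H) * (1 - E)).rank ≤ (1 - E).rank := Matrix.rank_mul_le_right _ _
      _ = n - r := hcompl
  have h2 : ((1 - E) * H).rank ≤ n - r :=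
    calc ((1 - E) * H).rank ≤ (1 - E).rank := Matrix.rank_mul_le_left _ _
      _ = n - r := hcompl
  have hle : H.rank ≤ (n - r) + (n - r) := by
    calc H.rank = (E * H + (1 - E) * H).rank := by rw [← hsplit]
      _ ≤ (E * H).rank + ((1 - E) * H).rank := matrix_rank_add_le _ _
      _ ≤ (n - r) + (n - r) := add_le_add h1 h2
  rw [hrank] at hle
  omega
end
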